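/- Let L be a partial group that is the internal semidirect product of a partial subgroup X with a partial subgroup N, let n, m ∈ N and x ∈ X. Then: (a) m ∈ D(Π(x,n)) if and only if m^x ∈ D(n), and if so, (m^x)^n = m^{Π(x,n)}; (b) m ∈ D(n) if and only if m ∈ D(Π(n,x)), and if so, (m^n)^x = m^{Π(n,x)}; (c) m^{x^{-1}} ∈ D(n) if and only if m ∈ D(n^x), and if so, m^{n^x} = ((m^{x^{-1}})^n)^x. -/
import Mathlib


universe u v

/-- A partial group: a set `L` with a domain `D ⊆ W(L)` of words, a (total extension of the)
partial product `Pi`, and an involutory inversion, satisfying axioms (PG1)-(PG4).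
The value of `Pi` outside `D` is irrelevant. -/
structure PartialGroup (L : Type u) : Type u where
  D : Set (List L)
  Pi : List L → L
  inv : L → L
  inv_inv : ∀ g, inv (inv g) = g
  singleton_mem : ∀ g, [g] ∈ D
  append_left_mem : ∀ {u v : List L}, u ++ v ∈ D → u ∈ D
  append_right_mem : ∀ {u v : List L}, u ++ v ∈ D → v ∈ D
  Pi_singleton : ∀ g, Pi [g] = g
  pg3_mem : ∀ u v w : List L, u ++ v ++ w ∈ D → u ++ [Pi v] ++ w ∈ D
  pg3_eq : ∀ u v w : List L, u ++ v ++ w ∈ D → Pi (u ++ v ++ w) = Pi (u ++ [Pi v] ++ w)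
  pg4_mem : ∀ w ∈ D, (List.map inv w).reverse ++ w ∈ D
  pg4_eq : ∀ w ∈ D, Pi ((List.map inv w).reverse ++ w) = Pi []

namespace PartialGroup

variable {L : Type u} {L' : Type v}

/-- Inversion of a word: `(g_1,...,g_k)⁻¹ = (g_k⁻¹,...,g_1⁻¹)`. -/
def wInv (P : PartialGroup L) (w : List L) : List L := (w.map P.inv).reverse

/-- The identity `1 = Π(∅)`. -/
def one (P : PartialGroup L) : L := P.Pi []

/-- Conjugation `x^g = Π(g⁻¹, x, g)`. -/
def cnj (P : PartialGroup L) (g x : L) : L := P.Pi [P.inv g, x, g]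

/-- `x ∈ D(g)`, i.e. `(g⁻¹, x, g) ∈ D(L)`. -/
def memD (P : PartialGroup L) (g x : L) : Prop := [P.inv g, x, g] ∈ P.D

/-- `H` is a partial subgroup of `L`. -/
def IsPartialSubgroup (P : PartialGroup L) (H : Set L) : Prop :=
  H.Nonempty ∧ (∀ g ∈ H, P.inv g ∈ H) ∧ ∀ w ∈ P.D, (∀ x ∈ w, x ∈ H) → P.Pi w ∈ H

/-- `N` is a partial normal subgroup of `L`. -/
def IsPartialNormal (P : PartialGroup L) (N : Set L) : Prop :=
  P.IsPartialSubgroup N ∧ ∀ g : L, ∀ n ∈ N, P.memD g n → P.cnj g n ∈ N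

/-- `H` is a subgroup of `L`: a partial subgroup with `W(H) ⊆ D(L)`. -/
def IsSubgroup (P : PartialGroup L) (H : Set L) : Prop :=
  P.IsPartialSubgroup H ∧ ∀ w : List L, (∀ x ∈ w, x ∈ H) → w ∈ P.D

/-- Homomorphism of partial groups. -/
def IsHom (P : PartialGroup L) (P' : PartialGroup L') (φ : L → L') : Prop :=
  ∀ w ∈ P.D, w.map φ ∈ P'.D ∧ φ (P.Pi w) = P'.Pi (w.map φ)

/-- Isomorphism of partial groups: a bijective homomorphism with `D(L)^φ = D(L')`. -/
def IsIso (P : PartialGroup L) (P' : PartialGroup L') (φ : L → L') : Prop :=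
  Function.Bijective φ ∧ P.IsHom P' φ ∧ List.map φ '' P.D = P'.D

end PartialGroup

open PartialGroup

/-- For a list of pairs `((x₁,n₁),...,(xₖ,nₖ))` (with `xᵢ ∈ X`, `nᵢ ∈ N`), the word
`w_N = (n₁^{Π(x₂,...,xₖ)}, n₂^{Π(x₃,...,xₖ)}, ..., nₖ)`. -/
def sdn {L : Type u} (P : PartialGroup L) : List (L × L) → List L
  | [] => []
  | q :: rest => P.cnj (P.Pi (rest.map Prod.fst)) q.2 :: sdn P rest

/-- `L` is the internal semidirect product of the partial subgroup `X` with the partial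
subgroup `N`: axioms (SD1), (SD2), (SD3). -/
structure IsIntSemidirect {L : Type u} (P : PartialGroup L) (X N : Set L) : Prop where
  subX : P.IsPartialSubgroup X
  subN : P.IsPartialSubgroup N
  sd1 : ∀ x ∈ X, (∀ n ∈ N, P.memD x n) ∧ P.cnj x '' N = N
  sd2 : ∀ g : L, ∃! q : L × L, q.1 ∈ X ∧ q.2 ∈ N ∧ [q.1, q.2] ∈ P.D ∧ g = P.Pi [q.1, q.2]
  sd3 : ∀ q : List (L × L), (∀ r ∈ q, r.1 ∈ X ∧ r.2 ∈ N) →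
      ((q.map fun r => P.Pi [r.1, r.2]) ∈ P.D ↔
        q.map Prod.fst ∈ P.D ∧ sdn P q ∈ P.D) ∧
      ((q.map fun r => P.Pi [r.1, r.2]) ∈ P.D →
        P.Pi (q.map fun r => P.Pi [r.1, r.2]) =
          P.Pi [P.Pi (q.map Prod.fst), P.Pi (sdn P q)])

namespace PartialGroup

variable {L : Type u} (P : PartialGroup L)

lemma nil_mem : ([] : List L) ∈ P.D :=
  P.append_left_mem (u := []) (v := [P.Pi []]) (P.singleton_mem (P.Pi []))

lemma inv_mul_mem (g : L) : [P.inv g, g] ∈ P.D := by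
  simpa using P.pg4_mem [g] (P.singleton_mem g)

lemma inv_mul_pi (g : L) : P.Pi [P.inv g, g] = P.Pi [] := by
  simpa using P.pg4_eq [g] (P.singleton_mem g)

lemma mul_inv_mem (g : L) : [g, P.inv g] ∈ P.D := by
  have := P.inv_mul_mem (P.inv g); rwa [P.inv_inv] at this

lemma mul_inv_pi (g : L) : P.Pi [g, P.inv g] = P.Pi [] := by
  have := P.inv_mul_pi (P.inv g); rwa [P.inv_inv] at this

lemma ins_mem {u v : List L} (h : u ++ v ∈ P.D) : u ++ [P.Pi []] ++ v ∈ P.D :=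
  P.pg3_mem u [] v (by simpa using h)

lemma ins_eq {u v : List L} (h : u ++ v ∈ P.D) :
    P.Pi (u ++ [P.Pi []] ++ v) = P.Pi (u ++ v) := by
  have := P.pg3_eq u [] v (by simpa using h)
  simpa using this.symm

lemma pi_one_cons (a : L) : P.Pi [P.Pi [], a] = a := by
  have h1 : ([] : List L) ++ [a] ∈ P.D := by simpa using P.singleton_mem a
  have := P.ins_eq h1
  simpa [P.Pi_singleton] using this

lemma pi_cons_one (a : L) : P.Pi [a, P.Pi []] = a := by
  have h1 : [a] ++ ([] : List L) ∈ P.D := by simpa using P.singleton_mem a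
  have := P.ins_eq h1
  simpa [P.Pi_singleton] using this

lemma del_mem (u v : List L) (h : u ++ [P.Pi []] ++ v ∈ P.D) : u ++ v ∈ P.D := by
  cases v with
  | cons a v' =>
    have h2 := P.pg3_mem u [P.Pi [], a] v' (by simpa using h)
    rw [P.pi_one_cons] at h2
    simpa using h2
  | nil =>
    rcases List.eq_nil_or_concat u with rfl | ⟨u', b, rfl⟩
    · simpa using P.nil_mem
    · have h2 := P.pg3_mem u' [b, P.Pi []] [] (by simpa using h)
      rw [P.pi_cons_one] at h2
      simpa using h2

lemma del_eq (u v : List L) (h : u ++ [P.Pi []] ++ v ∈ P.D) :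
    P.Pi (u ++ [P.Pi []] ++ v) = P.Pi (u ++ v) := by
  cases v with
  | cons a v' =>
    have h2 := P.pg3_eq u [P.Pi [], a] v' (by simpa using h)
    rw [P.pi_one_cons] at h2
    simpa using h2
  | nil =>
    rcases List.eq_nil_or_concat u with rfl | ⟨u', b, rfl⟩
    · simpa using P.Pi_singleton (P.Pi [])
    · have h2 := P.pg3_eq u' [b, P.Pi []] [] (by simpa using h)
      rw [P.pi_cons_one] at h2
      simpa using h2

lemma eq_inv_of_pair {j k : L} (hD : [j, k] ∈ P.D) (hPi : P.Pi [j, k] = P.Pi []) :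
    j = P.inv k := by
  have h4 : [P.inv k, P.inv j, j, k] ∈ P.D := by simpa using P.pg4_mem [j, k] hD
  have h3 : [P.inv j, j, k] ∈ P.D := P.append_right_mem (u := [P.inv k]) h4
  have e1 := P.pg3_eq [P.inv j] [j, k] [] h3
  have e2 := P.pg3_eq [] [P.inv j, j] [k] h3
  simp only [List.append_nil] at e1 e2
  rw [hPi] at e1
  rw [P.inv_mul_pi] at e2
  have : P.inv j = k := by
    have := e1.symm.trans e2
    rw [show ([P.inv j] ++ [P.Pi []] : List L) = [P.inv j, P.Pi []] from rfl] at this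
    rw [P.pi_cons_one] at this
    rw [show (([] : List L) ++ [P.Pi []] ++ [k] : List L) = [P.Pi [], k] from rfl] at this
    rw [P.pi_one_cons] at this
    exact this
  rw [← this, P.inv_inv]

lemma pair_inv_mem {a b : L} (h : [a, b] ∈ P.D) : [P.inv b, P.inv a] ∈ P.D := by
  have h4 : [P.inv b, P.inv a, a, b] ∈ P.D := by simpa using P.pg4_mem [a, b] h
  exact P.append_left_mem (u := [P.inv b, P.inv a]) (v := [a, b]) h4

lemma pair_inv_pi {a b : L} (h : [a, b] ∈ P.D) :
    P.Pi [P.inv b, P.inv a] = P.inv (P.Pi [a, b]) := by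
  have h4 : [P.inv b, P.inv a, a, b] ∈ P.D := by simpa using P.pg4_mem [a, b] h
  have m1 := P.pg3_mem [P.inv b, P.inv a] [a, b] [] h4
  simp only [List.append_nil] at m1
  have e1 := P.pg3_eq [P.inv b, P.inv a] [a, b] [] h4
  have m2 := P.pg3_mem [] [P.inv b, P.inv a] [P.Pi [a, b]] m1
  have e2 := P.pg3_eq [] [P.inv b, P.inv a] [P.Pi [a, b]] m1
  have e0 : P.Pi [P.inv b, P.inv a, a, b] = P.Pi [] := by
    simpa using P.pg4_eq [a, b] h
  apply P.eq_inv_of_pair (by simpa using m2)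
  have : P.Pi [P.Pi [P.inv b, P.inv a], P.Pi [a, b]] = P.Pi [] := by
    have := (e2.symm.trans (by simpa using e1.symm)).trans e0
    simpa using this
  exact this

end PartialGroup
namespace PartialGroup

variable {L : Type u} (P : PartialGroup L)

lemma six_mem {g a : L} (hD : [P.inv g, a, g] ∈ P.D) :
    [P.inv g, P.inv a, g, P.inv g, a, g] ∈ P.D := by
  simpa [P.inv_inv] using P.pg4_mem [P.inv g, a, g] hD

lemma six_pi {g a : L} (hD : [P.inv g, a, g] ∈ P.D) :
    P.Pi [P.inv g, P.inv a, g, P.inv g, a, g] = P.Pi [] := by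
  simpa [P.inv_inv] using P.pg4_eq [P.inv g, a, g] hD

lemma reconj {g a : L} (hD : [P.inv g, a, g] ∈ P.D) :
    [g, P.Pi [P.inv g, a, g], P.inv g] ∈ P.D ∧
      P.Pi [g, P.Pi [P.inv g, a, g], P.inv g] = a := by
  have h6 := P.six_mem hD
  have h12 : [P.inv g, P.inv a, g, P.inv g, a, g, P.inv g, P.inv a, g, P.inv g, a, g]
      ∈ P.D := by
    simpa [P.inv_inv] using P.pg4_mem [P.inv g, P.inv a, g, P.inv g, a, g] h6
  have h10 : [g, P.inv g, a, g, P.inv g, P.inv a, g, P.inv g, a, g] ∈ P.D :=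
    P.append_right_mem (u := [P.inv g, P.inv a]) h12
  have hT : [g, P.inv g, a, g, P.inv g] ∈ P.D :=
    P.append_left_mem (u := [g, P.inv g, a, g, P.inv g]) (v := [P.inv a, g, P.inv g, a, g]) h10
  constructor
  · exact P.pg3_mem [g] [P.inv g, a, g] [P.inv g] hT
  · have e1 := P.pg3_eq [g] [P.inv g, a, g] [P.inv g] hT
    have m2 := P.pg3_mem [] [g, P.inv g] [a, g, P.inv g] hT
    have e2 := P.pg3_eq [] [g, P.inv g] [a, g, P.inv g] hT
    rw [P.mul_inv_pi] at m2 e2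
    have m3 := P.del_mem [] [a, g, P.inv g] m2
    have e3 := P.del_eq [] [a, g, P.inv g] m2
    have e4 := P.pg3_eq [a] [g, P.inv g] [] (by simpa using m3)
    have m4 := P.pg3_mem [a] [g, P.inv g] [] (by simpa using m3)
    rw [P.mul_inv_pi] at e4 m4
    simp only [List.append_nil] at e4 m4
    have e5 : P.Pi ([a] ++ [P.Pi []]) = a := by
      simpa [P.Pi_singleton] using P.ins_eq (u := [a]) (v := []) (by simpa using P.singleton_mem a)
    calc P.Pi [g, P.Pi [P.inv g, a, g], P.inv g] = P.Pi [g, P.inv g, a, g, P.inv g] := e1.symm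
      _ = P.Pi ([] ++ [P.Pi []] ++ [a, g, P.inv g]) := e2
      _ = P.Pi [a, g, P.inv g] := by simpa using e3
      _ = P.Pi ([a] ++ [P.Pi []]) := by simpa using e4
      _ = a := e5

lemma conj_inv {g a : L} (hD : [P.inv g, a, g] ∈ P.D) :
    [P.inv g, P.inv a, g] ∈ P.D ∧
      P.Pi [P.inv g, P.inv a, g] = P.inv (P.Pi [P.inv g, a, g]) := by
  have h6 := P.six_mem hD
  have m1 : [P.inv g, P.inv a, g] ∈ P.D :=
    P.append_left_mem (u := [P.inv g, P.inv a, g]) (v := [P.inv g, a, g]) h6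
  refine ⟨m1, ?_⟩
  have m2 := P.pg3_mem [] [P.inv g, P.inv a, g] [P.inv g, a, g] h6
  have e2 := P.pg3_eq [] [P.inv g, P.inv a, g] [P.inv g, a, g] h6
  simp only [List.nil_append] at m2 e2
  have m3 := P.pg3_mem [P.Pi [P.inv g, P.inv a, g]] [P.inv g, a, g] [] m2
  have e3 := P.pg3_eq [P.Pi [P.inv g, P.inv a, g]] [P.inv g, a, g] [] m2
  simp only [List.append_nil, List.singleton_append] at m2 e2 m3 e3
  apply P.eq_inv_of_pair m3
  rw [← e3, ← e2]
  exact P.six_pi hD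

lemma inv_pi_nil : P.inv (P.Pi []) = P.Pi [] := by
  have h := P.inv_mul_pi (P.Pi [])
  rwa [P.pi_cons_one] at h

lemma cnj_one_left_mem (a : L) : [P.inv (P.Pi []), a, P.Pi []] ∈ P.D := by
  rw [P.inv_pi_nil]
  have h1 : [a] ++ [P.Pi []] ∈ P.D := P.ins_mem (u := [a]) (v := []) (by simpa using P.singleton_mem a)
  simpa using P.ins_mem (u := []) (v := [a, P.Pi []]) (by simpa using h1)

lemma cnj_one_left (a : L) : P.cnj (P.Pi []) a = a := by
  unfold cnj
  rw [P.inv_pi_nil]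
  have h1 : [a] ++ ([] : List L) ∈ P.D := by simpa using P.singleton_mem a
  have e1 := P.ins_eq h1
  have h2 : ([] : List L) ++ [a, P.Pi []] ∈ P.D := by
    simpa using P.ins_mem (u := [a]) (v := []) h1
  have e2 := P.ins_eq h2
  simp only [List.append_nil, List.nil_append] at e1 e2 ⊢
  rw [show ([P.Pi [], a, P.Pi []] : List L) = [P.Pi []] ++ [a, P.Pi []] from rfl] at *
  rw [e2]
  rw [show ([a, P.Pi []] : List L) = [a] ++ [P.Pi []] from rfl, e1, P.Pi_singleton]

lemma cnj_one_right_mem (g : L) : [P.inv g, P.Pi [], g] ∈ P.D := by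
  simpa using P.ins_mem (u := [P.inv g]) (v := [g]) (by simpa using P.inv_mul_mem g)

lemma cnj_one_right (g : L) : P.cnj g (P.Pi []) = P.Pi [] := by
  unfold cnj
  have e := P.ins_eq (u := [P.inv g]) (v := [g]) (by simpa using P.inv_mul_mem g)
  simpa [P.inv_mul_pi] using e

lemma one_mem_of_sub {H : Set L} (hH : P.IsPartialSubgroup H) : P.Pi [] ∈ H := by
  obtain ⟨g, hg⟩ := hH.1
  have h1 : [g, P.inv g] ∈ P.D := P.mul_inv_mem g
  have := hH.2.2 [g, P.inv g] h1 ?_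
  · rwa [P.mul_inv_pi] at this
  · intro y hy
    simp only [List.mem_cons, List.not_mem_nil, or_false] at hy
    rcases hy with rfl | rfl
    · exact hg
    · exact hH.2.1 g hg

end PartialGroup
namespace PartialGroup

variable {L : Type u} (P : PartialGroup L)

lemma memD_def (g a : L) : P.memD g a ↔ [P.inv g, a, g] ∈ P.D := Iff.rfl

lemma cnj_def (g a : L) : P.cnj g a = P.Pi [P.inv g, a, g] := rfl

lemma pi_one_one (a : L) : P.Pi [P.Pi [], P.Pi [], a] = a := by
  have h1 : ([] : List L) ++ [a] ∈ P.D := by simpa using P.singleton_mem a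
  have h2 : ([] : List L) ++ [P.Pi [], a] ∈ P.D := by simpa using P.ins_mem h1
  have e2 := P.ins_eq h2
  simp only [List.nil_append, List.singleton_append] at e2
  rw [e2]
  exact P.pi_one_cons a

lemma cnj_inv_cnj {g a : L} (hD : [P.inv g, a, g] ∈ P.D) :
    P.cnj (P.inv g) (P.cnj g a) = a := by
  unfold cnj
  rw [P.inv_inv]
  exact (P.reconj hD).2

lemma cnj_inv_cnj_mem {g a : L} (hD : [P.inv g, a, g] ∈ P.D) :
    [P.inv (P.inv g), P.cnj g a, P.inv g] ∈ P.D := by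
  rw [P.inv_inv]
  exact (P.reconj hD).1

end PartialGroup

section SD

variable {L : Type u} {P : PartialGroup L} {X N : Set L}

lemma sd_cnj_mem_N (h : IsIntSemidirect P X N) {x n : L} (hx : x ∈ X) (hn : n ∈ N) :
    P.cnj x n ∈ N := by
  have : P.cnj x n ∈ P.cnj x '' N := ⟨n, hn, rfl⟩
  rwa [(h.sd1 x hx).2] at this

lemma sd_pair_mem (h : IsIntSemidirect P X N) {x n : L} (hx : x ∈ X) (hn : n ∈ N) :
    [x, n] ∈ P.D := by
  have oneX := P.one_mem_of_sub h.subX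
  have oneN := P.one_mem_of_sub h.subN
  have hq : ∀ r ∈ [(x, P.Pi []), (P.Pi [], n)], r.1 ∈ X ∧ r.2 ∈ N := by
    intro r hr
    simp only [List.mem_cons, List.not_mem_nil, or_false] at hr
    rcases hr with rfl | rfl
    · exact ⟨hx, oneN⟩
    · exact ⟨oneX, hn⟩
  have h3 := (h.sd3 _ hq).1
  simp only [List.map_cons, List.map_nil, sdn] at h3
  rw [P.pi_cons_one, P.pi_one_cons, P.cnj_one_left, P.cnj_one_right] at h3
  apply h3.mpr
  constructor
  · simpa using P.ins_mem (u := [x]) (v := []) (by simpa using P.singleton_mem x)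
  · simpa using P.ins_mem (u := []) (v := [n]) (by simpa using P.singleton_mem n)

lemma sd_comm (h : IsIntSemidirect P X N) {x n : L} (hx : x ∈ X) (hn : n ∈ N) :
    [n, x] ∈ P.D ∧ P.Pi [n, x] = P.Pi [x, P.cnj x n] := by
  have oneX := P.one_mem_of_sub h.subX
  have oneN := P.one_mem_of_sub h.subN
  have hq : ∀ r ∈ [(P.Pi [], n), (x, P.Pi [])], r.1 ∈ X ∧ r.2 ∈ N := by
    intro r hr
    simp only [List.mem_cons, List.not_mem_nil, or_false] at hr
    rcases hr with rfl | rfl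
    · exact ⟨oneX, hn⟩
    · exact ⟨hx, oneN⟩
  have h3 := h.sd3 _ hq
  simp only [List.map_cons, List.map_nil, sdn] at h3
  rw [P.pi_cons_one, P.pi_one_cons, P.cnj_one_right, P.Pi_singleton] at h3
  have hmem : [n, x] ∈ P.D := by
    apply h3.1.mpr
    constructor
    · simpa using P.ins_mem (u := []) (v := [x]) (by simpa using P.singleton_mem x)
    · simpa using P.ins_mem (u := [P.cnj x n]) (v := [])
        (by simpa using P.singleton_mem (P.cnj x n))
  refine ⟨hmem, ?_⟩
  have e := h3.2 hmem
  rw [P.pi_one_cons, P.pi_cons_one] at e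
  exact e

end SD
section SD2

variable {L : Type u} {P : PartialGroup L} {X N : Set L}

lemma sd3_conj (h : IsIntSemidirect P X N) {x a b c : L} (hx : x ∈ X)
    (ha : a ∈ N) (hb : b ∈ N) (hc : c ∈ N) :
    ([P.inv x, a, b, c, x] ∈ P.D ↔
        [P.cnj x a, P.cnj x b, P.cnj x c] ∈ P.D) ∧
      ([P.inv x, a, b, c, x] ∈ P.D →
        P.Pi [P.inv x, a, b, c, x] = P.Pi [P.cnj x a, P.cnj x b, P.cnj x c]) := by
  have oneX := P.one_mem_of_sub h.subX
  have oneN := P.one_mem_of_sub h.subN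
  have hxi : P.inv x ∈ X := h.subX.2.1 x hx
  have hq : ∀ r ∈ [(P.inv x, P.Pi []), (P.Pi [], a), (P.Pi [], b), (P.Pi [], c),
      (x, P.Pi [])], r.1 ∈ X ∧ r.2 ∈ N := by
    intro r hr
    simp only [List.mem_cons, List.not_mem_nil, or_false] at hr
    rcases hr with rfl | rfl | rfl | rfl | rfl
    · exact ⟨hxi, oneN⟩
    · exact ⟨oneX, ha⟩
    · exact ⟨oneX, hb⟩
    · exact ⟨oneX, hc⟩
    · exact ⟨hx, oneN⟩
  have h3 := h.sd3 _ hq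
  simp only [List.map_cons, List.map_nil, sdn] at h3
  rw [P.pi_cons_one, P.pi_one_cons a, P.pi_one_cons b, P.pi_one_cons c,
    P.pi_cons_one, P.cnj_one_right, P.pi_one_one, P.pi_one_cons x, P.Pi_singleton,
    P.cnj_one_left] at h3
  -- the (w_X) word [inv x, 1, 1, 1, x] is always in D with product 1
  have hw0 : [P.inv x] ++ [x] ∈ P.D := by simpa using P.inv_mul_mem x
  have hw1 : [P.inv x] ++ [P.Pi []] ++ [x] ∈ P.D := P.ins_mem hw0
  have ew1 := P.ins_eq hw0
  have hw2 : [P.inv x] ++ [P.Pi []] ++ [P.Pi [], x] ∈ P.D := by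
    apply P.ins_mem (u := [P.inv x]) (v := [P.Pi [], x])
    simpa using hw1
  have ew2 := P.ins_eq (u := [P.inv x]) (v := [P.Pi [], x]) (by simpa using hw1)
  have hw3 : [P.inv x] ++ [P.Pi []] ++ [P.Pi [], P.Pi [], x] ∈ P.D := by
    apply P.ins_mem (u := [P.inv x]) (v := [P.Pi [], P.Pi [], x])
    simpa using hw2
  have ew3 := P.ins_eq (u := [P.inv x]) (v := [P.Pi [], P.Pi [], x]) (by simpa using hw2)
  have hwX : [P.inv x, P.Pi [], P.Pi [], P.Pi [], x] ∈ P.D := by simpa using hw3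
  have ewX : P.Pi [P.inv x, P.Pi [], P.Pi [], P.Pi [], x] = P.Pi [] := by
    have := ew3.trans (ew2.trans (ew1.trans (P.inv_mul_pi x)))
    simpa using this
  -- the (w_N) word [1, a^x, b^x, c^x, 1] is in D iff [a^x, b^x, c^x] is
  have hNiff : [P.Pi [], P.cnj x a, P.cnj x b, P.cnj x c, P.Pi []] ∈ P.D ↔
      [P.cnj x a, P.cnj x b, P.cnj x c] ∈ P.D := by
    constructor
    · intro hw
      have h1 := P.del_mem [] [P.cnj x a, P.cnj x b, P.cnj x c, P.Pi []] (by simpa using hw)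
      have h2 := P.del_mem [P.cnj x a, P.cnj x b, P.cnj x c] [] (by simpa using h1)
      simpa using h2
    · intro hw
      have h1 : [P.cnj x a, P.cnj x b, P.cnj x c] ++ [P.Pi []] ++ [] ∈ P.D :=
        P.ins_mem (by simpa using hw)
      have h2 : ([] : List L) ++ [P.Pi []] ++
          [P.cnj x a, P.cnj x b, P.cnj x c, P.Pi []] ∈ P.D :=
        P.ins_mem (by simpa using h1)
      simpa using h2
  constructor
  · rw [h3.1, hNiff]
    simp [hwX]
  · intro hD
    have e := h3.2 hD
    rw [ewX] at e
    have hNmem := (h3.1.mp hD).2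
    have d1 := P.del_eq [] [P.cnj x a, P.cnj x b, P.cnj x c, P.Pi []] (by simpa using hNmem)
    have m1 := P.del_mem [] [P.cnj x a, P.cnj x b, P.cnj x c, P.Pi []] (by simpa using hNmem)
    have d2 := P.del_eq [P.cnj x a, P.cnj x b, P.cnj x c] [] (by simpa using m1)
    simp only [List.nil_append, List.append_nil, List.cons_append] at d1 d2
    rw [e, d1, d2, P.pi_one_cons]

end SD2
section SD3sec

variable {L : Type u} {P : PartialGroup L} {X N : Set L}

lemma sd_equiv (h : IsIntSemidirect P X N) {x n m : L} (hx : x ∈ X)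
    (hn : n ∈ N) (hm : m ∈ N) :
    (P.memD n m ↔ P.memD (P.cnj x n) (P.cnj x m)) ∧
      (P.memD n m → P.cnj x (P.cnj n m) = P.cnj (P.cnj x n) (P.cnj x m)) := by
  have hxi : P.inv x ∈ X := h.subX.2.1 x hx
  have hni : P.inv n ∈ N := h.subN.2.1 n hn
  have hxn : [P.inv x, n, x] ∈ P.D := (h.sd1 x hx).1 n hn
  have hxni : [P.inv x, P.inv n, x] ∈ P.D := (h.sd1 x hx).1 _ hni
  have hxm : [P.inv x, m, x] ∈ P.D := (h.sd1 x hx).1 m hm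
  have hcnjn : P.cnj x n ∈ N := sd_cnj_mem_N h hx hn
  have hcnjm : P.cnj x m ∈ N := sd_cnj_mem_N h hx hm
  have hcnjni : P.inv (P.cnj x n) ∈ N := h.subN.2.1 _ hcnjn
  -- conjugate of inverse is inverse of conjugate
  have hci : P.cnj x (P.inv n) = P.inv (P.cnj x n) := by
    unfold PartialGroup.cnj
    exact (P.conj_inv hxn).2
  -- S7 forward instance
  have h7 := sd3_conj h hx hni hm hn
  rw [hci] at h7
  -- S7 instance for x⁻¹
  have h7' := sd3_conj h hxi hcnjni hcnjm hcnjn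
  rw [P.inv_inv] at h7'
  have r1 : P.cnj (P.inv x) (P.cnj x m) = m := P.cnj_inv_cnj hxm
  have r2 : P.cnj (P.inv x) (P.cnj x n) = n := P.cnj_inv_cnj hxn
  have r3 : P.cnj (P.inv x) (P.inv (P.cnj x n)) = P.inv n := by
    rw [← hci]
    exact P.cnj_inv_cnj hxni
  rw [r1, r2, r3] at h7'
  have hiff : P.memD n m ↔ P.memD (P.cnj x n) (P.cnj x m) := by
    constructor
    · intro hd
      have hW' := h7'.1.mpr hd
      have h1 : [x, P.inv (P.cnj x n), P.cnj x m, P.cnj x n] ∈ P.D :=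
        P.append_left_mem (u := [x, P.inv (P.cnj x n), P.cnj x m, P.cnj x n])
          (v := [P.inv x]) hW'
      exact P.append_right_mem (u := [x]) h1
    · intro hd
      have hW := h7.1.mpr hd
      have h1 : [P.inv n, m, n, x] ∈ P.D := P.append_right_mem (u := [P.inv x]) hW
      exact P.append_left_mem (u := [P.inv n, m, n]) (v := [x]) h1
  refine ⟨hiff, ?_⟩
  intro hd
  have hW := h7.1.mpr (hiff.mp hd)
  have e1 := h7.2 hW
  have e2 := P.pg3_eq [P.inv x] [P.inv n, m, n] [x] hW
  simp only [List.cons_append, List.nil_append] at e2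
  show P.Pi [P.inv x, P.Pi [P.inv n, m, n], x] = _
  rw [← e2, e1]
  rfl

lemma sd_a (h : IsIntSemidirect P X N) {x n m : L} (hx : x ∈ X)
    (hn : n ∈ N) (hm : m ∈ N) :
    (P.memD (P.Pi [x, n]) m ↔ P.memD n (P.cnj x m)) ∧
      (P.memD (P.Pi [x, n]) m → P.cnj n (P.cnj x m) = P.cnj (P.Pi [x, n]) m) := by
  have oneX := P.one_mem_of_sub h.subX
  have oneN := P.one_mem_of_sub h.subN
  have hxi : P.inv x ∈ X := h.subX.2.1 x hx
  have hni : P.inv n ∈ N := h.subN.2.1 n hn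
  have hxin : [P.inv (P.inv x), P.inv n, P.inv x] ∈ P.D := (h.sd1 _ hxi).1 _ hni
  set t : L := P.cnj (P.inv x) (P.inv n) with ht
  have htN : t ∈ N := sd_cnj_mem_N h hxi hni
  -- inv (Pi [x, n]) = Pi [inv x, t]
  have hpair : [x, n] ∈ P.D := sd_pair_mem h hx hn
  have hginv : P.inv (P.Pi [x, n]) = P.Pi [P.inv x, t] := by
    rw [← P.pair_inv_pi hpair]
    exact (sd_comm h hxi hni).2
  -- cnj x t = inv n
  have hct : P.cnj x t = P.inv n := by
    have := P.cnj_inv_cnj hxin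
    rwa [P.inv_inv] at this
  have hq : ∀ r ∈ [(P.inv x, t), (P.Pi [], m), (x, n)], r.1 ∈ X ∧ r.2 ∈ N := by
    intro r hr
    simp only [List.mem_cons, List.not_mem_nil, or_false] at hr
    rcases hr with rfl | rfl | rfl
    · exact ⟨hxi, htN⟩
    · exact ⟨oneX, hm⟩
    · exact ⟨hx, hn⟩
  have h3 := h.sd3 _ hq
  simp only [List.map_cons, List.map_nil, sdn] at h3
  rw [P.pi_one_cons m, ← hginv, P.pi_one_cons x, P.Pi_singleton, P.cnj_one_left,
    hct] at h3
  -- now h3 speaks of [inv g, m, g] with g = Pi [x, n]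
  -- w_X = [inv x, 1, x]
  have hw0 : [P.inv x] ++ [x] ∈ P.D := by simpa using P.inv_mul_mem x
  have hwX : [P.inv x, P.Pi [], x] ∈ P.D := by simpa using P.ins_mem hw0
  have ewX : P.Pi [P.inv x, P.Pi [], x] = P.Pi [] := by
    have := (P.ins_eq hw0).trans (P.inv_mul_pi x)
    simpa using this
  constructor
  · rw [P.memD_def, P.memD_def, h3.1]
    simp [hwX]
  · intro hD
    rw [P.memD_def] at hD
    have e := h3.2 hD
    rw [ewX, P.pi_one_cons] at e
    rw [P.cnj_def (P.Pi [x, n]) m, e]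
    rfl

end SD3sec
theorem stmt16 {L : Type u} (P : PartialGroup L) (X N : Set L)
    (h : IsIntSemidirect P X N) (x n m : L) (hx : x ∈ X) (hn : n ∈ N) (hm : m ∈ N) :
    ((P.memD (P.Pi [x, n]) m ↔ P.memD n (P.cnj x m)) ∧
      (P.memD (P.Pi [x, n]) m → P.cnj n (P.cnj x m) = P.cnj (P.Pi [x, n]) m)) ∧
    ((P.memD n m ↔ P.memD (P.Pi [n, x]) m) ∧
      (P.memD n m → P.cnj x (P.cnj n m) = P.cnj (P.Pi [n, x]) m)) ∧
    ((P.memD n (P.cnj (P.inv x) m) ↔ P.memD (P.cnj x n) m) ∧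
      (P.memD n (P.cnj (P.inv x) m) →
        P.cnj (P.cnj x n) m = P.cnj x (P.cnj n (P.cnj (P.inv x) m)))) := by
  have hxi : P.inv x ∈ X := h.subX.2.1 x hx
  have hcn : P.cnj x n ∈ N := sd_cnj_mem_N h hx hn
  have hcomm := sd_comm h hx hn
  have A := sd_a h hx hn hm
  have A' := sd_a h hx hcn hm
  have E := sd_equiv h hx hn hm
  refine ⟨A, ⟨?_, ?_⟩, ?_⟩
  · -- (b) iff
    rw [show P.Pi [n, x] = P.Pi [x, P.cnj x n] from hcomm.2]
    exact E.1.trans A'.1.symm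
  · -- (b) eq
    intro hd
    rw [show P.Pi [n, x] = P.Pi [x, P.cnj x n] from hcomm.2]
    have hD' : P.memD (P.Pi [x, P.cnj x n]) m := A'.1.mpr (E.1.mp hd)
    rw [E.2 hd, A'.2 hD']
  · -- (c)
    have hm' : P.cnj (P.inv x) m ∈ N := sd_cnj_mem_N h hxi hm
    have hxm : [P.inv x, m, x] ∈ P.D := (h.sd1 x hx).1 m hm
    have hxim : [P.inv (P.inv x), m, P.inv x] ∈ P.D := (h.sd1 _ hxi).1 m hm
    have hc : P.cnj x (P.cnj (P.inv x) m) = m := by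
      have := P.cnj_inv_cnj hxim
      rwa [P.inv_inv] at this
    have E' := sd_equiv h hx hn hm'
    rw [hc] at E'
    exact ⟨E'.1, fun hd => (E'.2 hd).symm⟩
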